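/- arXiv:2401.16510 — 5 statements merged into one kernel-verified Lean document; each statement's English description precedes it below -/
import Mathlib

section
/- For every k ∈ (0,1), the derivative of the complete elliptic integral of the first kind satisfies k · dK/dk(k) = E(k)/(1-k²) - K(k). -/
/-!
Differentiating under the integral sign, with the derivatives dominated by a multiple of
`1 / √(1 - s ^ 2)` (integrable on `[0, 1]` as the derivative of `arcsin`), gives
`K'(k) = ∫₀¹ k s² / (√(1 - s²) (1 - k² s²)^(3/2)) ds`. The identity is then the fundamental
theorem of calculus: for `G(s) = s √(1 - s²) / √(1 - k² s²)`, which vanishes at `0` and `1`,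
the integrand of `E / (1 - k²) - K - k K'` equals `k² / (1 - k²) · G'(s)`.
-/

open Real Set Filter MeasureTheory

open scoped Interval

noncomputable def ellipticK (k : ℝ) : ℝ :=
  ∫ s in (0:ℝ)..1, 1 / √((1 - s ^ 2) * (1 - k ^ 2 * s ^ 2))

noncomputable def ellipticE (k : ℝ) : ℝ :=
  ∫ s in (0:ℝ)..1, √(1 - k ^ 2 * s ^ 2) / √(1 - s ^ 2)

noncomputable def ellipticKDeriv (k : ℝ) : ℝ :=
  ∫ s in (0:ℝ)..1, k * s ^ 2 / (√(1 - s ^ 2) * √(1 - k ^ 2 * s ^ 2) ^ 3)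

lemma ae_uIoc_zero_one_of_forall_Ioo {P : ℝ → Prop} (h : ∀ t ∈ Ioo (0:ℝ) 1, P t) :
    ∀ᵐ t, t ∈ Ι (0:ℝ) 1 → P t := by
  rw [uIoc_of_le zero_le_one]
  filter_upwards [Ioo_ae_eq_Ioc (μ := volume) (a := (0:ℝ)) (b := 1)] with t ht hmem
  exact h t (ht.mpr hmem)

lemma intervalIntegrable_div_sqrt_one_sub_sq (C : ℝ) :
    IntervalIntegrable (fun s : ℝ => C / √(1 - s ^ 2)) volume 0 1 := by
  have h : IntervalIntegrable (fun s : ℝ => 1 / √(1 - s ^ 2)) volume 0 1 := by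
    refine intervalIntegral.intervalIntegrable_deriv_of_nonneg continuous_arcsin.continuousOn
      (fun s hs => hasDerivAt_arcsin ?_ ?_) (fun s _ => by positivity)
    all_goals simp only [zero_le_one, min_eq_left, max_eq_right, mem_Ioo] at hs; linarith [hs.1]
  simpa only [mul_one_div] using h.const_mul C

lemma intervalIntegrable_of_abs_le_div_sqrt_one_sub_sq {f : ℝ → ℝ} {C : ℝ}
    (hf : AEStronglyMeasurable f (volume.restrict (Ι 0 1)))
    (hbound : ∀ s ∈ Ioo (0:ℝ) 1, |f s| ≤ C / √(1 - s ^ 2)) :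
    IntervalIntegrable f volume 0 1 :=
  (intervalIntegrable_div_sqrt_one_sub_sq C).mono_fun' hf
    ((ae_restrict_iff' measurableSet_uIoc).2 (ae_uIoc_zero_one_of_forall_Ioo hbound))

lemma abs_ellipticK_integrand_le {k s : ℝ} (hk : k ^ 2 < 1) (hs : s ∈ Ioo (0:ℝ) 1) :
    |1 / √((1 - s ^ 2) * (1 - k ^ 2 * s ^ 2))| ≤ 1 / √(1 - k ^ 2) / √(1 - s ^ 2) := by
  obtain ⟨hs0, hs1⟩ := hs
  have ha : 0 < √(1 - s ^ 2) := sqrt_pos.2 (by nlinarith)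
  have hcb : √(1 - k ^ 2) ≤ √(1 - k ^ 2 * s ^ 2) :=
    sqrt_le_sqrt (by
      nlinarith [mul_le_mul_of_nonneg_left (show s ^ 2 ≤ 1 by nlinarith) (sq_nonneg k)])
  calc |1 / √((1 - s ^ 2) * (1 - k ^ 2 * s ^ 2))|
      = 1 / (√(1 - s ^ 2) * √(1 - k ^ 2 * s ^ 2)) := by
        rw [sqrt_mul (by nlinarith), abs_of_nonneg (by positivity)]
    _ ≤ 1 / (√(1 - s ^ 2) * √(1 - k ^ 2)) :=
        one_div_le_one_div_of_le (by positivity) (mul_le_mul_of_nonneg_left hcb ha.le)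
    _ = 1 / √(1 - k ^ 2) / √(1 - s ^ 2) := by ring

lemma abs_ellipticE_integrand_le (k s : ℝ) :
    |√(1 - k ^ 2 * s ^ 2) / √(1 - s ^ 2)| ≤ 1 / √(1 - s ^ 2) := by
  rw [abs_of_nonneg (by positivity)]
  exact div_le_div_of_nonneg_right (sqrt_le_one.2 (by nlinarith [sq_nonneg (k * s)]))
    (sqrt_nonneg _)

lemma abs_ellipticKDeriv_integrand_le {r x s : ℝ} (hr : r < 1) (hx : |x| ≤ r)
    (hs : s ∈ Ioo (0:ℝ) 1) :
    |x * s ^ 2 / (√(1 - s ^ 2) * √(1 - x ^ 2 * s ^ 2) ^ 3)| ≤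
      (1 / √(1 - r ^ 2)) ^ 3 / √(1 - s ^ 2) := by
  obtain ⟨hs0, hs1⟩ := hs
  have hx0 := abs_nonneg x
  have ha : 0 < √(1 - s ^ 2) := sqrt_pos.2 (by nlinarith)
  have hc : 0 < √(1 - r ^ 2) := sqrt_pos.2 (by nlinarith)
  have hx2 : x ^ 2 ≤ r ^ 2 := sq_le_sq' (abs_le.1 hx).1 (abs_le.1 hx).2
  have hcb : √(1 - r ^ 2) ≤ √(1 - x ^ 2 * s ^ 2) :=
    sqrt_le_sqrt (by
      nlinarith [mul_le_mul_of_nonneg_left (show s ^ 2 ≤ 1 by nlinarith) (sq_nonneg x)])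
  have hb : 0 < √(1 - x ^ 2 * s ^ 2) := hc.trans_le hcb
  calc |x * s ^ 2 / (√(1 - s ^ 2) * √(1 - x ^ 2 * s ^ 2) ^ 3)|
      = |x| * s ^ 2 / (√(1 - s ^ 2) * √(1 - x ^ 2 * s ^ 2) ^ 3) := by
        rw [abs_div, abs_of_pos (show 0 < √(1 - s ^ 2) * √(1 - x ^ 2 * s ^ 2) ^ 3 by positivity),
          abs_mul, abs_of_nonneg (sq_nonneg s)]
    _ ≤ 1 / (√(1 - s ^ 2) * √(1 - r ^ 2) ^ 3) :=
        div_le_div₀ zero_le_one (by nlinarith) (by positivity)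
          (mul_le_mul_of_nonneg_left (pow_le_pow_left₀ hc.le hcb 3) ha.le)
    _ = (1 / √(1 - r ^ 2)) ^ 3 / √(1 - s ^ 2) := by ring

lemma intervalIntegrable_ellipticK_integrand {k : ℝ} (hk : k ^ 2 < 1) :
    IntervalIntegrable (fun s : ℝ => 1 / √((1 - s ^ 2) * (1 - k ^ 2 * s ^ 2))) volume 0 1 :=
  intervalIntegrable_of_abs_le_div_sqrt_one_sub_sq
    (by fun_prop : Measurable _).aestronglyMeasurable
    fun _ hs => abs_ellipticK_integrand_le hk hs

lemma intervalIntegrable_ellipticE_integrand (k : ℝ) :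
    IntervalIntegrable (fun s : ℝ => √(1 - k ^ 2 * s ^ 2) / √(1 - s ^ 2)) volume 0 1 :=
  intervalIntegrable_of_abs_le_div_sqrt_one_sub_sq
    (by fun_prop : Measurable _).aestronglyMeasurable
    fun s _ => abs_ellipticE_integrand_le k s

lemma intervalIntegrable_ellipticKDeriv_integrand {k : ℝ} (hk : |k| < 1) :
    IntervalIntegrable (fun s : ℝ => k * s ^ 2 / (√(1 - s ^ 2) * √(1 - k ^ 2 * s ^ 2) ^ 3))
      volume 0 1 :=
  intervalIntegrable_of_abs_le_div_sqrt_one_sub_sq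
    (by fun_prop : Measurable _).aestronglyMeasurable
    fun _ hs => abs_ellipticKDeriv_integrand_le hk le_rfl hs

lemma hasDerivAt_ellipticK_integrand {x s : ℝ} (hs : s ^ 2 < 1)
    (hxs : x ^ 2 * s ^ 2 < 1) :
    HasDerivAt (fun x => 1 / √((1 - s ^ 2) * (1 - x ^ 2 * s ^ 2)))
      (x * s ^ 2 / (√(1 - s ^ 2) * √(1 - x ^ 2 * s ^ 2) ^ 3)) x := by
  have ha : 0 < √(1 - s ^ 2) := sqrt_pos.2 (by linarith)
  have hP : (1 - s ^ 2) * (1 - x ^ 2 * s ^ 2) ≠ 0 := by nlinarith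
  have hsqrt :=
    ((((hasDerivAt_pow 2 x).mul_const (s ^ 2)).const_sub 1).const_mul (1 - s ^ 2)).sqrt hP
  refine ((hasDerivAt_const x (1 : ℝ)).div hsqrt (sqrt_ne_zero'.2 (by nlinarith))).congr_deriv ?_
  rw [sqrt_mul (by linarith)]
  field_simp
  rw [sq_sqrt (by linarith), sq_sqrt (by linarith)]
  ring

lemma hasDerivAt_mul_sqrt_one_sub_sq_div_sqrt {k s : ℝ} (hs : s ^ 2 < 1)
    (hks : k ^ 2 * s ^ 2 < 1) :
    HasDerivAt (fun s => s * √(1 - s ^ 2) / √(1 - k ^ 2 * s ^ 2))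
      ((1 - 2 * s ^ 2 + k ^ 2 * s ^ 4) / (√(1 - s ^ 2) * √(1 - k ^ 2 * s ^ 2) ^ 3)) s := by
  have hb : 0 < √(1 - k ^ 2 * s ^ 2) := sqrt_pos.2 (by linarith)
  have ha' := ((hasDerivAt_pow 2 s).const_sub 1).sqrt (by linarith)
  have hb' := (((hasDerivAt_pow 2 s).const_mul (k ^ 2)).const_sub 1).sqrt (by linarith)
  refine (((hasDerivAt_id' s).mul ha').div hb' hb.ne').congr_deriv ?_
  simp only [Pi.mul_apply]
  field_simp
  rw [sq_sqrt (by linarith), sq_sqrt (by linarith)]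
  ring

theorem hasDerivAt_ellipticK {k : ℝ} (hk : |k| < 1) :
    HasDerivAt ellipticK (ellipticKDeriv k) k := by
  obtain ⟨r, hkr, hr⟩ := exists_between hk
  have hk_mem : k ∈ Ioo (-r) r := abs_lt.1 hkr
  have h_diff : ∀ s ∈ Ioo (0:ℝ) 1, ∀ x ∈ Ioo (-r) r,
      HasDerivAt (fun x => 1 / √((1 - s ^ 2) * (1 - x ^ 2 * s ^ 2)))
        (x * s ^ 2 / (√(1 - s ^ 2) * √(1 - x ^ 2 * s ^ 2) ^ 3)) x := fun s hs x hx => by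
    have hs2 : s ^ 2 < 1 := by nlinarith [hs.1, hs.2]
    have hx2 : x ^ 2 < 1 := by nlinarith [hx.1, hx.2]
    exact hasDerivAt_ellipticK_integrand hs2 (by nlinarith)
  refine (intervalIntegral.hasDerivAt_integral_of_dominated_loc_of_deriv_le
    (Ioo_mem_nhds hk_mem.1 hk_mem.2)
    (bound := fun s => (1 / √(1 - r ^ 2)) ^ 3 / √(1 - s ^ 2))
    (Eventually.of_forall fun _ => (by fun_prop : Measurable _).aestronglyMeasurable)
    (intervalIntegrable_ellipticK_integrand (by nlinarith [sq_abs k, abs_nonneg k]))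
    (by fun_prop : Measurable _).aestronglyMeasurable
    (ae_uIoc_zero_one_of_forall_Ioo fun s hs x hx =>
      abs_ellipticKDeriv_integrand_le hr (abs_le.2 ⟨hx.1.le, hx.2.le⟩) hs)
    (intervalIntegrable_div_sqrt_one_sub_sq _)
    (ae_uIoc_zero_one_of_forall_Ioo h_diff)).2

theorem mul_ellipticKDeriv {k : ℝ} (hk : |k| < 1) :
    k * ellipticKDeriv k = ellipticE k / (1 - k ^ 2) - ellipticK k := by
  have hk2 : k ^ 2 < 1 := by nlinarith [sq_abs k, abs_nonneg k]
  have hK := intervalIntegrable_ellipticK_integrand hk2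
  have hE := (intervalIntegrable_ellipticE_integrand k).div_const (1 - k ^ 2)
  have hD := (intervalIntegrable_ellipticKDeriv_integrand hk).const_mul k
  let G : ℝ → ℝ := fun s => k ^ 2 / (1 - k ^ 2) * (s * √(1 - s ^ 2) / √(1 - k ^ 2 * s ^ 2))
  have hG_cont : ContinuousOn G (Icc 0 1) := by
    refine continuousOn_const.mul (ContinuousOn.div (by fun_prop) (by fun_prop) fun s hs => ?_)
    have hs2 : s ^ 2 ≤ 1 := by nlinarith [hs.1, hs.2]
    exact (sqrt_pos.2 (by nlinarith [mul_le_mul_of_nonneg_left hs2 (sq_nonneg k)])).ne'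
  have hG_deriv : ∀ s ∈ Ioo (0:ℝ) 1, HasDerivAt G
      (√(1 - k ^ 2 * s ^ 2) / √(1 - s ^ 2) / (1 - k ^ 2) - 1 / √((1 - s ^ 2) * (1 - k ^ 2 * s ^ 2))
        - k * (k * s ^ 2 / (√(1 - s ^ 2) * √(1 - k ^ 2 * s ^ 2) ^ 3))) s := by
    intro s hs
    have hs2 : s ^ 2 < 1 := by nlinarith [hs.1, hs.2]
    have hks2 : k ^ 2 * s ^ 2 < 1 := by nlinarith [mul_le_mul_of_nonneg_left hs2.le (sq_nonneg k)]
    have ha : 0 < √(1 - s ^ 2) := sqrt_pos.2 (by linarith)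
    have hb : 0 < √(1 - k ^ 2 * s ^ 2) := sqrt_pos.2 (by linarith)
    have hk2' : 1 - k ^ 2 ≠ 0 := by linarith
    refine ((hasDerivAt_mul_sqrt_one_sub_sq_div_sqrt hs2 hks2).const_mul _).congr_deriv ?_
    rw [sqrt_mul (by linarith)]
    have hb2 : √(1 - k ^ 2 * s ^ 2) ^ 2 = 1 - k ^ 2 * s ^ 2 := sq_sqrt (by linarith)
    field_simp
    linear_combination (-(k ^ 2 - 1 + √(1 - k ^ 2 * s ^ 2) ^ 2 + (1 - k ^ 2 * s ^ 2))) * hb2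
  have hFTC := intervalIntegral.integral_eq_sub_of_hasDerivAt_of_le zero_le_one hG_cont hG_deriv
    ((hE.sub hK).sub hD)
  simp only [G, one_pow, sub_self, sqrt_zero, mul_zero, zero_div, zero_mul] at hFTC
  rw [intervalIntegral.integral_sub (hE.sub hK) hD, intervalIntegral.integral_sub hE hK,
    intervalIntegral.integral_div, intervalIntegral.integral_const_mul] at hFTC
  simp only [ellipticK, ellipticE, ellipticKDeriv]
  linarith

theorem stmt2 (k : ℝ) (hk : k ∈ Set.Ioo (0:ℝ) 1) :
    k * deriv (fun k : ℝ => ∫ s in (0:ℝ)..1, 1 / Real.sqrt ((1 - s^2) * (1 - k^2 * s^2))) k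
      = (∫ s in (0:ℝ)..1, Real.sqrt (1 - k^2 * s^2) / Real.sqrt (1 - s^2)) / (1 - k^2)
        - ∫ s in (0:ℝ)..1, 1 / Real.sqrt ((1 - s^2) * (1 - k^2 * s^2)) := by
  have hk' : |k| < 1 := abs_lt.2 ⟨by linarith [hk.1], hk.2⟩
  change k * deriv ellipticK k = ellipticE k / (1 - k ^ 2) - ellipticK k
  rw [(hasDerivAt_ellipticK hk').deriv, mul_ellipticKDeriv hk']
end

section
/- Let 0 < a₀ < a₁ < a₂ and define κ := (a₂² - a₀a₁)/(a₂(a₂-a₀)(a₂-a₁)). Then ∫_{a₀}^{a₁} √t · (2 - κ(a₂ - t)) / (√((t-a₀)(a₁-t)) · (a₂-t)²) dt > 0. -/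
open Real Set Filter MeasureTheory

/-! Write `W t = √((t - a₀) * (a₁ - t))` and `g t = 2 - κ * (a₂ - t)`. For this value of κ,
`g t / (W t * (a₂ - t) ^ 2)` is `a₂⁻¹ / (W t * (a₂ - t))` plus a multiple of the derivative of
`W t / (a₂ - t)`, which integrates to zero because `W` vanishes at both endpoints. Hence
`∫ g / (W * (a₂ - t) ^ 2) = a₂⁻¹ * ∫ 1 / (W * (a₂ - t)) > 0`.
The weight `g` is increasing with its zero at `a₂ - 2 / κ`, and `√` is increasing, so
`√t * g t ≥ √s * g t` for `s = max (a₂ - 2 / κ) a₀ > 0`; the integral is therefore at least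
`√s` times a positive number. -/

section

variable {a b c : ℝ}

theorem hasDerivAt_arcsin_two_mul_sub_div {t : ℝ} (ht : t ∈ Ioo a b) :
    HasDerivAt (fun s => arcsin ((2 * s - a - b) / (b - a))) (√((t - a) * (b - t)))⁻¹ t := by
  have hba : 0 < b - a := by linarith [ht.1, ht.2]
  have hP : 0 < (t - a) * (b - t) := mul_pos (by linarith [ht.1]) (by linarith [ht.2])
  have hu : HasDerivAt (fun s => (2 * s - a - b) / (b - a)) (2 / (b - a)) t := by
    simpa using (((hasDerivAt_id t).const_mul 2).sub_const a |>.sub_const b).div_const (b - a)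
  have h1 : 1 - ((2 * t - a - b) / (b - a)) ^ 2 = (2 * √((t - a) * (b - t)) / (b - a)) ^ 2 := by
    rw [div_pow, div_pow, mul_pow, sq_sqrt hP.le]; field_simp; ring
  have hne : 0 < 1 - ((2 * t - a - b) / (b - a)) ^ 2 := by rw [h1]; positivity
  refine ((hasDerivAt_arcsin (by nlinarith) (by nlinarith)).comp t hu).congr_deriv ?_
  rw [h1, sqrt_sq (by positivity)]
  field_simp

theorem intervalIntegrable_inv_sqrt_mul_sub (hab : a ≤ b) :
    IntervalIntegrable (fun t => (√((t - a) * (b - t)))⁻¹) volume a b := by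
  rw [intervalIntegrable_iff_integrableOn_Ioc_of_le hab]
  exact intervalIntegral.integrableOn_deriv_of_nonneg (by fun_prop)
    (fun t ht => hasDerivAt_arcsin_two_mul_sub_div ht) (fun t _ => by positivity)

theorem intervalIntegrable_div_sqrt_mul_sub_mul (hab : a ≤ b) {q r : ℝ → ℝ}
    (hq : ContinuousOn q (Icc a b)) (hr : ContinuousOn r (Icc a b))
    (hr0 : ∀ t ∈ Icc a b, r t ≠ 0) :
    IntervalIntegrable (fun t => q t / (√((t - a) * (b - t)) * r t)) volume a b := by
  have hqr : ContinuousOn (fun t => q t / r t) (Icc a b) := hq.div hr hr0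
  obtain ⟨M, hM⟩ := isCompact_Icc.exists_bound_of_continuousOn hqr
  simp_rw [div_mul_eq_div_div_swap, div_eq_mul_inv (q _ / r _)]
  refine ((intervalIntegrable_inv_sqrt_mul_sub hab).const_mul M).mono_fun' ?_ ?_
  · rw [uIoc_of_le hab]
    exact ((hqr.mono Ioc_subset_Icc_self).aestronglyMeasurable measurableSet_Ioc).mul
      (by fun_prop : Measurable fun t => (√((t - a) * (b - t)))⁻¹).aestronglyMeasurable
  · rw [uIoc_of_le hab, EventuallyLE, ae_restrict_iff' measurableSet_Ioc]
    refine ae_of_all _ fun t ht => ?_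
    rw [norm_mul, norm_inv, norm_of_nonneg (sqrt_nonneg _)]
    exact mul_le_mul_of_nonneg_right (hM t (Ioc_subset_Icc_self ht)) (by positivity)

theorem hasDerivAt_sqrt_mul_sub_div_sub {t : ℝ} (ht : t ∈ Ioo a b) (hc : c ≠ t) :
    HasDerivAt (fun s => √((s - a) * (b - s)) / (c - s))
      (((c - (a + b) / 2) * (c - t) - (c - a) * (c - b)) /
        (√((t - a) * (b - t)) * (c - t) ^ 2)) t := by
  have hP : 0 < (t - a) * (b - t) := mul_pos (by linarith [ht.1]) (by linarith [ht.2])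
  have hct : c - t ≠ 0 := sub_ne_zero.2 hc
  have hW : HasDerivAt (fun s => √((s - a) * (b - s)))
      ((a + b - 2 * t) / (2 * √((t - a) * (b - t)))) t := by
    have hp : HasDerivAt (fun s => (s - a) * (b - s)) (a + b - 2 * t) t :=
      (((hasDerivAt_id' t).sub_const a).fun_mul ((hasDerivAt_id' t).const_sub b)).congr_deriv
        (by ring)
    simpa using hp.sqrt hP.ne'
  refine (hW.div ((hasDerivAt_id' t).const_sub c) hct).congr_deriv ?_
  have hsq := sq_sqrt hP.le
  have hs := (sqrt_pos.2 hP).ne'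
  field_simp
  linear_combination 2 * hsq

theorem integral_sub_mul_sub_div_sqrt_mul_sub_mul_sq_eq_zero (hab : a ≤ b) (hbc : b < c) :
    ∫ t in a..b, ((c - (a + b) / 2) * (c - t) - (c - a) * (c - b)) /
      (√((t - a) * (b - t)) * (c - t) ^ 2) = 0 := by
  have hc : ∀ t ∈ Icc a b, c - t ≠ 0 := fun t ht => by linarith [ht.2]
  rw [intervalIntegral.integral_eq_sub_of_hasDerivAt_of_le hab (by fun_prop (disch := exact hc))
    (fun t ht => hasDerivAt_sqrt_mul_sub_div_sub ht (by linarith [ht.2]))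
    (intervalIntegrable_div_sqrt_mul_sub_mul hab (by fun_prop) (by fun_prop)
      fun t ht => pow_ne_zero 2 (hc t ht))]
  simp

theorem integral_one_div_sqrt_mul_sub_mul_sub_pos (hab : a < b) (hbc : b < c) :
    0 < ∫ t in a..b, 1 / (√((t - a) * (b - t)) * (c - t)) := by
  refine intervalIntegral.intervalIntegral_pos_of_pos_on ?_ (fun t ht => ?_) hab
  · exact intervalIntegrable_div_sqrt_mul_sub_mul hab.le continuousOn_const (by fun_prop)
      fun t ht => by linarith [ht.2]
  · have : 0 < (t - a) * (b - t) := mul_pos (by linarith [ht.1]) (by linarith [ht.2])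
    have : 0 < c - t := by linarith [ht.2]
    positivity

theorem integral_two_sub_mul_div_sqrt_mul_sub_mul_sq (hab : a ≤ b) (hbc : b < c) (hc : c ≠ 0) :
    ∫ t in a..b, (2 - (c ^ 2 - a * b) / (c * (c - a) * (c - b)) * (c - t)) /
        (√((t - a) * (b - t)) * (c - t) ^ 2)
      = c⁻¹ * ∫ t in a..b, 1 / (√((t - a) * (b - t)) * (c - t)) := by
  have hca : c - a ≠ 0 := by linarith
  have hcb : c - b ≠ 0 := by linarith
  have hct : ∀ t ∈ Icc a b, c - t ≠ 0 := fun t ht => by linarith [ht.2]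
  set D := (c - a) * (c - b)
  have hsplit : EqOn
      (fun t => (2 - (c ^ 2 - a * b) / (c * (c - a) * (c - b)) * (c - t)) /
        (√((t - a) * (b - t)) * (c - t) ^ 2))
      (fun t => -2 / D * (((c - (a + b) / 2) * (c - t) - D) /
          (√((t - a) * (b - t)) * (c - t) ^ 2))
        + c⁻¹ * (1 / (√((t - a) * (b - t)) * (c - t)))) (uIcc a b) := by
    intro t ht
    rw [uIcc_of_le hab] at ht
    have := hct t ht
    simp only [D]
    field_simp
    ring
  rw [intervalIntegral.integral_congr hsplit, intervalIntegral.integral_add,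
    intervalIntegral.integral_const_mul, intervalIntegral.integral_const_mul,
    integral_sub_mul_sub_div_sqrt_mul_sub_mul_sq_eq_zero hab hbc, mul_zero, zero_add]
  · exact (intervalIntegrable_div_sqrt_mul_sub_mul hab (by fun_prop) (by fun_prop)
      fun t ht => pow_ne_zero 2 (hct t ht)).const_mul _
  · exact (intervalIntegrable_div_sqrt_mul_sub_mul hab continuousOn_const (by fun_prop)
      hct).const_mul _

end

theorem sqrt_max_mul_le_sqrt_mul {a c κ t : ℝ} (hκ : 0 < κ) (ht : a ≤ t) :
    √(max (c - 2 / κ) a) * (2 - κ * (c - t)) ≤ √t * (2 - κ * (c - t)) := by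
  have hsign : 2 - κ * (c - t) = κ * (t - (c - 2 / κ)) := by field_simp; ring
  rcases le_or_gt (c - 2 / κ) t with h | h
  · refine mul_le_mul_of_nonneg_right (sqrt_le_sqrt (max_le h ht)) ?_
    rw [hsign]; exact mul_nonneg hκ.le (by linarith)
  · refine mul_le_mul_of_nonpos_right (sqrt_le_sqrt (le_max_of_le_left h.le)) ?_
    rw [hsign]; exact mul_nonpos_of_nonneg_of_nonpos hκ.le (by linarith)

theorem stmt4 (a₀ a₁ a₂ κ : ℝ) (h0 : 0 < a₀) (h1 : a₀ < a₁) (h2 : a₁ < a₂)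
    (hκ : κ = (a₂^2 - a₀*a₁) / (a₂ * (a₂ - a₀) * (a₂ - a₁))) :
    0 < ∫ t in a₀..a₁,
          Real.sqrt t * (2 - κ * (a₂ - t)) / (Real.sqrt ((t - a₀) * (a₁ - t)) * (a₂ - t)^2) := by
  have ha₂ : 0 < a₂ := by linarith
  have hκ_pos : 0 < κ := by
    rw [hκ]
    exact div_pos (by nlinarith) (mul_pos (mul_pos ha₂ (by linarith)) (by linarith))
  have hint : ∀ q : ℝ → ℝ, ContinuousOn q (Icc a₀ a₁) → IntervalIntegrable
      (fun t => q t / (√((t - a₀) * (a₁ - t)) * (a₂ - t) ^ 2)) volume a₀ a₁ := fun q hq =>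
    intervalIntegrable_div_sqrt_mul_sub_mul h1.le hq (by fun_prop)
      fun t ht => pow_ne_zero 2 (by linarith [ht.2])
  set s := max (a₂ - 2 / κ) a₀
  have hs : 0 < √s := sqrt_pos.2 (lt_max_of_lt_right h0)
  calc (0 : ℝ)
      < √s * (a₂⁻¹ * ∫ t in a₀..a₁, 1 / (√((t - a₀) * (a₁ - t)) * (a₂ - t))) :=
        mul_pos hs (mul_pos (inv_pos.2 ha₂) (integral_one_div_sqrt_mul_sub_mul_sub_pos h1 h2))
    _ = √s * ∫ t in a₀..a₁, (2 - κ * (a₂ - t)) / (√((t - a₀) * (a₁ - t)) * (a₂ - t) ^ 2) := by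
        rw [hκ, integral_two_sub_mul_div_sqrt_mul_sub_mul_sq h1.le h2 ha₂.ne']
    _ = ∫ t in a₀..a₁, √s * ((2 - κ * (a₂ - t)) / (√((t - a₀) * (a₁ - t)) * (a₂ - t) ^ 2)) :=
        (intervalIntegral.integral_const_mul _ _).symm
    _ ≤ _ := by
        refine intervalIntegral.integral_mono_on h1.le ((hint _ (by fun_prop)).const_mul _)
          (hint _ (by fun_prop)) fun t ht => ?_
        rw [← mul_div_assoc]
        exact div_le_div_of_nonneg_right (sqrt_max_mul_le_sqrt_mul hκ_pos ht.1) (by positivity)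
end

section
/- Let 0 < a₀ < a₁ < a₂ and define κ := (a₂² - a₀a₁)/(a₂(a₂-a₀)(a₂-a₁)). Then ∫_{a₀}^{a₁} √t · (2 - κ(a₂-t)) / (√((t-a₀)(a₁-t)) (a₂-t)²) dt equals (2a₀√a₁ / (a₂(a₂-a₀)(a₂-a₁))) · ((a₂/a₀)·E(√(1-a₀/a₁)) - K(√(1-a₀/a₁))), where K and E are the complete elliptic integrals of the first and second kind. -/
/-!
Substituting `t = a₁ - (a₁ - a₀) sin² θ` turns `dt / √((t - a₀)(a₁ - t))` into `2 dθ` on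
`[0, π/2]`, and `s = sin θ` turns the two elliptic integrals into `∫ √(t/a₁) dθ` and
`∫ √(a₁/t) dθ`. After this the integrand `√t (2 - κ (a₂ - t)) / (a₂ - t)²` equals
`(a₂ √t - a₀ a₁ / √t) / (a₂ (a₂ - a₀) (a₂ - a₁))` plus a multiple of the derivative of
`sin θ cos θ √t / (a₂ - t)`, which vanishes at both ends of `[0, π/2]`.
-/

open Real Set Filter MeasureTheory

lemma sin_pos_and_cos_pos_of_mem_Ioo {θ : ℝ} (hθ : θ ∈ Ioo 0 (π / 2)) :
    0 < sin θ ∧ 0 < cos θ :=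
  ⟨sin_pos_of_pos_of_lt_pi hθ.1 (by linarith [hθ.2, pi_pos]),
    cos_pos_of_mem_Ioo ⟨by linarith [hθ.1, pi_pos], hθ.2⟩⟩

lemma Ioo_min_max_zero_pi_div_two : Ioo (min 0 (π / 2)) (max 0 (π / 2)) = Ioo 0 (π / 2) := by
  rw [min_eq_left pi_div_two_pos.le, max_eq_right pi_div_two_pos.le]

theorem integral_zero_one_eq_integral_sin_mul_cos (g : ℝ → ℝ) :
    ∫ s in (0:ℝ)..1, g s = ∫ θ in (0:ℝ)..π / 2, g (sin θ) * cos θ := by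
  have := intervalIntegral.integral_comp_mul_deriv_of_deriv_nonneg (g := g) (a := 0) (b := π / 2)
    continuous_sin.continuousOn (fun θ _ ↦ hasDerivAt_sin θ) (fun θ hθ ↦
      (sin_pos_and_cos_pos_of_mem_Ioo (Ioo_min_max_zero_pi_div_two ▸ hθ)).2.le)
  simpa using this.symm

theorem integral_div_sqrt_sub_mul_sub {a b : ℝ} (hab : a < b) (F : ℝ → ℝ) :
    ∫ t in a..b, F t / √((t - a) * (b - t)) =
      2 * ∫ θ in (0:ℝ)..π / 2, F (b - (b - a) * sin θ ^ 2) := by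
  have hba := sub_pos.2 hab
  have hsubst := intervalIntegral.integral_comp_mul_deriv_of_deriv_nonpos
    (g := fun t ↦ F t / √((t - a) * (b - t))) (a := 0) (b := π / 2)
    (f := fun θ ↦ b - (b - a) * sin θ ^ 2) (f' := fun θ ↦ -((b - a) * (2 * sin θ * cos θ)))
    (by fun_prop) (fun θ _ ↦ by
      simpa using ((hasDerivAt_sin θ).pow 2 |>.const_mul (b - a)).const_sub b)
    (fun θ hθ ↦ by
      obtain ⟨hs, hc⟩ := sin_pos_and_cos_pos_of_mem_Ioo (Ioo_min_max_zero_pi_div_two ▸ hθ)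
      rw [neg_nonpos]; positivity)
  simp only [sin_zero, sin_pi_div_two, ne_eq, OfNat.ofNat_ne_zero, not_false_eq_true, zero_pow,
    one_pow, mul_zero, sub_zero, mul_one, sub_sub_cancel] at hsubst
  rw [← intervalIntegral.integral_const_mul, intervalIntegral.integral_symm, ← hsubst,
    ← intervalIntegral.integral_neg]
  refine intervalIntegral.integral_congr_Ioo_of_le pi_div_two_pos.le fun θ hθ ↦ ?_
  obtain ⟨hs, hc⟩ := sin_pos_and_cos_pos_of_mem_Ioo hθ
  have hroot : √((b - (b - a) * sin θ ^ 2 - a) * (b - (b - (b - a) * sin θ ^ 2)))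
      = (b - a) * sin θ * cos θ := by
    rw [← sqrt_sq (by positivity : 0 ≤ (b - a) * sin θ * cos θ), mul_pow, cos_sq']
    ring_nf
  simp only [Function.comp, hroot]
  field_simp

theorem integral_sqrt_one_sub_mul_sq_div_sqrt_one_sub_sq (m : ℝ) :
    ∫ s in (0:ℝ)..1, √(1 - m * s ^ 2) / √(1 - s ^ 2) =
      ∫ θ in (0:ℝ)..π / 2, √(1 - m * sin θ ^ 2) := by
  rw [integral_zero_one_eq_integral_sin_mul_cos]
  refine intervalIntegral.integral_congr_Ioo_of_le pi_div_two_pos.le fun θ hθ ↦ ?_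
  have hc := (sin_pos_and_cos_pos_of_mem_Ioo hθ).2
  rw [← cos_sq', sqrt_sq hc.le]
  field_simp

theorem integral_one_div_sqrt_one_sub_sq_mul (m : ℝ) :
    ∫ s in (0:ℝ)..1, 1 / √((1 - s ^ 2) * (1 - m * s ^ 2)) =
      ∫ θ in (0:ℝ)..π / 2, 1 / √(1 - m * sin θ ^ 2) := by
  rw [integral_zero_one_eq_integral_sin_mul_cos]
  refine intervalIntegral.integral_congr_Ioo_of_le pi_div_two_pos.le fun θ hθ ↦ ?_
  have hc := (sin_pos_and_cos_pos_of_mem_Ioo hθ).2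
  rw [← cos_sq', sqrt_mul (sq_nonneg _), sqrt_sq hc.le]
  field_simp

section
variable {a₀ a₁ a₂ : ℝ}

lemma hasDerivAt_sin_mul_cos_mul_sqrt_div (θ : ℝ) (hT : 0 < a₁ - (a₁ - a₀) * sin θ ^ 2)
    (hw : a₂ - (a₁ - (a₁ - a₀) * sin θ ^ 2) ≠ 0) :
    HasDerivAt (fun θ ↦ sin θ * cos θ * √(a₁ - (a₁ - a₀) * sin θ ^ 2) /
        (a₂ - (a₁ - (a₁ - a₀) * sin θ ^ 2)))
      ((cos θ ^ 2 - sin θ ^ 2) * √(a₁ - (a₁ - a₀) * sin θ ^ 2) /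
            (a₂ - (a₁ - (a₁ - a₀) * sin θ ^ 2))
        - (a₁ - a₀) * (sin θ ^ 2 * cos θ ^ 2) /
            (√(a₁ - (a₁ - a₀) * sin θ ^ 2) * (a₂ - (a₁ - (a₁ - a₀) * sin θ ^ 2)))
        - 2 * (a₁ - a₀) * (sin θ ^ 2 * cos θ ^ 2) * √(a₁ - (a₁ - a₀) * sin θ ^ 2) /
            (a₂ - (a₁ - (a₁ - a₀) * sin θ ^ 2)) ^ 2) θ := by
  have hpath : HasDerivAt (fun θ ↦ a₁ - (a₁ - a₀) * sin θ ^ 2)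
      (-((a₁ - a₀) * (2 * sin θ * cos θ))) θ := by
    simpa using ((hasDerivAt_sin θ).pow 2 |>.const_mul (a₁ - a₀)).const_sub a₁
  have hroot := hpath.sqrt hT.ne'
  have hsq := sqrt_pos.2 hT
  refine ((((hasDerivAt_sin θ).mul (hasDerivAt_cos θ)).mul hroot).div
    (hpath.const_sub a₂) hw).congr_deriv ?_
  simp only [Pi.mul_apply]
  generalize √(a₁ - (a₁ - a₀) * sin θ ^ 2) = r at hsq ⊢
  field_simp
  ring

lemma sqrt_mul_div_sq_eq_add_deriv {κ s c T : ℝ} (h1 : a₀ < a₁) (h2 : a₁ < a₂)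
    (hκ : κ = (a₂ ^ 2 - a₀ * a₁) / (a₂ * (a₂ - a₀) * (a₂ - a₁)))
    (hsc : s ^ 2 + c ^ 2 = 1) (hT : T = a₁ - (a₁ - a₀) * s ^ 2) (hT0 : 0 < T) :
    √T * (2 - κ * (a₂ - T)) / (a₂ - T) ^ 2 =
      (a₂ * √T - a₀ * a₁ / √T) / (a₂ * (a₂ - a₀) * (a₂ - a₁)) +
        (a₁ - a₀) / ((a₂ - a₀) * (a₂ - a₁)) *
          ((c ^ 2 - s ^ 2) * √T / (a₂ - T) - (a₁ - a₀) * (s ^ 2 * c ^ 2) / (√T * (a₂ - T))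
            - 2 * (a₁ - a₀) * (s ^ 2 * c ^ 2) * √T / (a₂ - T) ^ 2) := by
  obtain ⟨r, hr0, rfl⟩ : ∃ r, 0 < r ∧ T = r ^ 2 := ⟨√T, sqrt_pos.2 hT0, (sq_sqrt hT0.le).symm⟩
  have hc : c ^ 2 = 1 - s ^ 2 := by linarith
  have hs : s ^ 2 = (a₁ - r ^ 2) / (a₁ - a₀) := by
    field_simp [(sub_pos.2 h1).ne']; linarith
  have hw : a₂ - r ^ 2 ≠ 0 := by nlinarith
  have h20 : a₂ ≠ 0 := by nlinarith
  have : a₂ - a₀ ≠ 0 := by linarith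
  have : a₂ - a₁ ≠ 0 := by linarith
  have : a₁ - a₀ ≠ 0 := by linarith
  rw [sqrt_sq hr0.le, hc, hs, hκ]
  field_simp
  ring

lemma integral_sqrt_mul_div_sq_eq (h0 : 0 < a₀) (h1 : a₀ < a₁) (h2 : a₁ < a₂) {κ : ℝ}
    (hκ : κ = (a₂ ^ 2 - a₀ * a₁) / (a₂ * (a₂ - a₀) * (a₂ - a₁))) :
    ∫ θ in (0:ℝ)..π / 2, √(a₁ - (a₁ - a₀) * sin θ ^ 2) *
        (2 - κ * (a₂ - (a₁ - (a₁ - a₀) * sin θ ^ 2))) / (a₂ - (a₁ - (a₁ - a₀) * sin θ ^ 2)) ^ 2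
      = (a₂ * (∫ θ in (0:ℝ)..π / 2, √(a₁ - (a₁ - a₀) * sin θ ^ 2))
          - a₀ * a₁ * ∫ θ in (0:ℝ)..π / 2, 1 / √(a₁ - (a₁ - a₀) * sin θ ^ 2))
          / (a₂ * (a₂ - a₀) * (a₂ - a₁)) := by
  set T : ℝ → ℝ := fun θ ↦ a₁ - (a₁ - a₀) * sin θ ^ 2
  have hT : ∀ θ, a₀ ≤ T θ ∧ T θ ≤ a₁ := fun θ ↦ by
    have := sin_sq_le_one θ
    constructor <;> nlinarith [sq_nonneg (sin θ)]
  have hT0 : ∀ θ, 0 < T θ := fun θ ↦ h0.trans_le (hT θ).1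
  have hw : ∀ θ, a₂ - T θ ≠ 0 := fun θ ↦ by linarith [(hT θ).2]
  have hroot : ∀ θ, √(T θ) ≠ 0 := fun θ ↦ (sqrt_pos.2 (hT0 θ)).ne'
  set g' : ℝ → ℝ := fun θ ↦ (cos θ ^ 2 - sin θ ^ 2) * √(T θ) / (a₂ - T θ)
        - (a₁ - a₀) * (sin θ ^ 2 * cos θ ^ 2) / (√(T θ) * (a₂ - T θ))
        - 2 * (a₁ - a₀) * (sin θ ^ 2 * cos θ ^ 2) * √(T θ) / (a₂ - T θ) ^ 2 with hg'
  have hcont_g' : Continuous g' := by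
    simp only [hg']
    fun_prop (disch := intro θ; simp only [hw θ, hroot θ, ne_eq, mul_eq_zero, pow_eq_zero_iff,
      or_self, not_false_eq_true, OfNat.ofNat_ne_zero])
  have hFTC : ∫ θ in (0:ℝ)..π / 2, g' θ = 0 := by
    rw [intervalIntegral.integral_eq_sub_of_hasDerivAt
      (fun θ _ ↦ hasDerivAt_sin_mul_cos_mul_sqrt_div θ (hT0 θ) (hw θ))
      (hcont_g'.intervalIntegrable _ _)]
    simp
  calc _ = ∫ θ in (0:ℝ)..π / 2,
        ((a₂ * √(T θ) - a₀ * a₁ * (1 / √(T θ))) / (a₂ * (a₂ - a₀) * (a₂ - a₁))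
          + (a₁ - a₀) / ((a₂ - a₀) * (a₂ - a₁)) * g' θ) := by
        refine intervalIntegral.integral_congr fun θ _ ↦ ?_
        simp only [mul_one_div]
        exact sqrt_mul_div_sq_eq_add_deriv h1 h2 hκ (sin_sq_add_cos_sq θ) rfl (hT0 θ)
    _ = _ := by
        rw [intervalIntegral.integral_add, intervalIntegral.integral_div,
          intervalIntegral.integral_const_mul, hFTC, intervalIntegral.integral_sub,
          intervalIntegral.integral_const_mul, intervalIntegral.integral_const_mul, mul_zero,
          add_zero]
        all_goals apply Continuous.intervalIntegrable; fun_prop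
end

theorem stmt5 (a₀ a₁ a₂ κ : ℝ) (h0 : 0 < a₀) (h1 : a₀ < a₁) (h2 : a₁ < a₂)
    (hκ : κ = (a₂^2 - a₀*a₁) / (a₂ * (a₂ - a₀) * (a₂ - a₁))) :
    (∫ t in a₀..a₁,
        Real.sqrt t * (2 - κ * (a₂ - t)) / (Real.sqrt ((t - a₀) * (a₁ - t)) * (a₂ - t)^2))
      = (2 * a₀ * Real.sqrt a₁ / (a₂ * (a₂ - a₀) * (a₂ - a₁))) *
          ((a₂ / a₀) *
            (∫ s in (0:ℝ)..1,
              Real.sqrt (1 - (Real.sqrt (1 - a₀/a₁))^2 * s^2) / Real.sqrt (1 - s^2))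
          - ∫ s in (0:ℝ)..1,
              1 / Real.sqrt ((1 - s^2) * (1 - (Real.sqrt (1 - a₀/a₁))^2 * s^2))) := by
  have ha₁ : 0 < a₁ := h0.trans h1
  have hpath : ∀ θ, 1 - (1 - a₀ / a₁) * sin θ ^ 2 = (a₁ - (a₁ - a₀) * sin θ ^ 2) / a₁ :=
    fun θ ↦ by field_simp
  have hk : 0 ≤ 1 - a₀ / a₁ := by rw [sub_nonneg, div_le_one ha₁]; exact h1.le
  simp_rw [div_mul_eq_div_div_swap, integral_div_sqrt_sub_mul_sub h1]
  rw [integral_sqrt_mul_div_sq_eq h0 h1 h2 hκ, sq_sqrt hk,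
    integral_sqrt_one_sub_mul_sq_div_sqrt_one_sub_sq, integral_one_div_sqrt_one_sub_sq_mul]
  simp only [hpath, sqrt_div' _ ha₁.le, one_div_div, intervalIntegral.integral_div]
  simp only [div_eq_mul_inv, one_mul, intervalIntegral.integral_const_mul]
  have := sqrt_pos.2 ha₁
  field_simp
  rw [sq_sqrt ha₁.le]
  ring
end

section
/- Let 0 < a₀ < a₁ < a₂. Then for every λ ∈ (a₀, a₁), (√((a₂-a₀)(a₂-a₁)/a₂) / π) · ∫_λ^{a₁} √t / (√((t-a₀)(a₁-t)) (a₂-t)) dt < √(a₁/a₂) < 1. -/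
/-!
The Möbius map `w = mobiusToUnit a₀ a₁ a₂` sending `a₀, a₁, a₂` to `-1, 1, ∞` satisfies
`1 - w(t)² = 4 (a₂ - a₀)(a₂ - a₁)(t - a₀)(a₁ - t) / ((a₁ - a₀)² (a₂ - t)²)`, which makes
`arcsin (w t) / √((a₂ - a₀)(a₂ - a₁))` a primitive of `1 / (√((t - a₀)(a₁ - t)) (a₂ - t))`.
Hence the integral of the latter over `[λ, a₁]` is `(π/2 - arcsin (w λ)) / √((a₂ - a₀)(a₂ - a₁))`,
strictly less than `π / √((a₂ - a₀)(a₂ - a₁))` because `w λ > -1` for `λ > a₀`.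
Bounding `√t ≤ √a₁` and multiplying by the prefactor gives exactly `√(a₁ / a₂)`.
-/

open Real Set Filter MeasureTheory

noncomputable def mobiusToUnit (a₀ a₁ a₂ t : ℝ) : ℝ :=
  2 * (a₂ - a₁) * (t - a₀) / ((a₁ - a₀) * (a₂ - t)) - 1

section

variable {a₀ a₁ a₂ lam : ℝ}

lemma mobiusToUnit_right (h01 : a₀ ≠ a₁) (h12 : a₁ ≠ a₂) : mobiusToUnit a₀ a₁ a₂ a₁ = 1 := by
  rw [mobiusToUnit, mul_assoc, mul_comm (a₂ - a₁),
    mul_div_cancel_right₀ _ (mul_ne_zero (sub_ne_zero.2 h01.symm) (sub_ne_zero.2 h12.symm))]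
  norm_num

lemma neg_one_lt_mobiusToUnit (h01 : a₀ < a₁) (h12 : a₁ < a₂) {t : ℝ} (ht₀ : a₀ < t)
    (ht₂ : t < a₂) : -1 < mobiusToUnit a₀ a₁ a₂ t := by
  have : 0 < 2 * (a₂ - a₁) * (t - a₀) / ((a₁ - a₀) * (a₂ - t)) := by
    apply div_pos <;> apply mul_pos <;> linarith
  rw [mobiusToUnit]
  linarith

lemma mobiusToUnit_lt_one (h01 : a₀ < a₁) (h12 : a₁ < a₂) {t : ℝ} (ht₁ : t < a₁) :
    mobiusToUnit a₀ a₁ a₂ t < 1 := by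
  rw [mobiusToUnit, sub_lt_iff_lt_add, div_lt_iff₀ (mul_pos (by linarith) (by linarith))]
  nlinarith [mul_pos (by linarith : 0 < a₂ - a₀) (by linarith : 0 < a₁ - t)]

lemma sqrt_one_sub_mobiusToUnit_sq (h01 : a₀ < a₁) (h12 : a₁ < a₂) {t : ℝ} (ht : t ∈ Icc a₀ a₁) :
    √(1 - mobiusToUnit a₀ a₁ a₂ t ^ 2)
      = 2 * √((a₂ - a₀) * (a₂ - a₁)) * √((t - a₀) * (a₁ - t)) / ((a₁ - a₀) * (a₂ - t)) := by
  obtain ⟨ht₀, ht₁⟩ := ht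
  have hE : a₁ - a₀ ≠ 0 := by linarith
  have hF : a₂ - t ≠ 0 := by linarith
  have hsq : 1 - mobiusToUnit a₀ a₁ a₂ t ^ 2
      = (2 * √((a₂ - a₀) * (a₂ - a₁)) * √((t - a₀) * (a₁ - t)) / ((a₁ - a₀) * (a₂ - t))) ^ 2 := by
    rw [div_pow, mul_pow, mul_pow, sq_sqrt (by nlinarith), sq_sqrt (by nlinarith), mobiusToUnit]
    field_simp
    ring
  rw [hsq, sqrt_sq (div_nonneg (by positivity) (mul_nonneg (by linarith) (by linarith)))]

lemma hasDerivAt_mobiusToUnit (h01 : a₀ ≠ a₁) {t : ℝ} (ht : t ≠ a₂) :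
    HasDerivAt (mobiusToUnit a₀ a₁ a₂)
      (2 * (a₂ - a₀) * (a₂ - a₁) / ((a₁ - a₀) * (a₂ - t) ^ 2)) t := by
  have hE : a₁ - a₀ ≠ 0 := sub_ne_zero.2 h01.symm
  have hF : a₂ - t ≠ 0 := sub_ne_zero.2 ht.symm
  have hnum : HasDerivAt (fun s ↦ 2 * (a₂ - a₁) * (s - a₀)) (2 * (a₂ - a₁)) t := by
    simpa using ((hasDerivAt_id t).sub_const a₀).const_mul (2 * (a₂ - a₁))
  have hden : HasDerivAt (fun s ↦ (a₁ - a₀) * (a₂ - s)) (-(a₁ - a₀)) t := by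
    simpa using ((hasDerivAt_id t).const_sub a₂).const_mul (a₁ - a₀)
  refine ((hnum.div hden (mul_ne_zero hE hF)).sub_const 1).congr_deriv ?_
  field_simp
  ring

lemma hasDerivAt_arcsin_mobiusToUnit (h01 : a₀ < a₁) (h12 : a₁ < a₂) {t : ℝ}
    (ht : t ∈ Ioo a₀ a₁) :
    HasDerivAt (fun s ↦ arcsin (mobiusToUnit a₀ a₁ a₂ s) / √((a₂ - a₀) * (a₂ - a₁)))
      (1 / (√((t - a₀) * (a₁ - t)) * (a₂ - t))) t := by
  obtain ⟨ht₀, ht₁⟩ := ht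
  have hw := hasDerivAt_mobiusToUnit (a₂ := a₂) h01.ne (t := t) (by linarith)
  have harcsin := (hasDerivAt_arcsin (neg_one_lt_mobiusToUnit h01 h12 ht₀ (by linarith)).ne'
    (mobiusToUnit_lt_one h01 h12 ht₁).ne).comp t hw
  refine (harcsin.div_const √((a₂ - a₀) * (a₂ - a₁))).congr_deriv ?_
  rw [sqrt_one_sub_mobiusToUnit_sq h01 h12 ⟨ht₀.le, ht₁.le⟩]
  have hD : √((a₂ - a₀) * (a₂ - a₁)) ^ 2 = (a₂ - a₀) * (a₂ - a₁) := sq_sqrt (by nlinarith)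
  have hDpos : 0 < √((a₂ - a₀) * (a₂ - a₁)) := sqrt_pos.2 (by nlinarith)
  have hXpos : 0 < √((t - a₀) * (a₁ - t)) := sqrt_pos.2 (by nlinarith)
  have hE : a₁ - a₀ ≠ 0 := by linarith
  have hF : a₂ - t ≠ 0 := by linarith
  field_simp
  linear_combination -hD

lemma continuousOn_arcsin_mobiusToUnit (h01 : a₀ ≠ a₁) :
    ContinuousOn (fun s ↦ arcsin (mobiusToUnit a₀ a₁ a₂ s) / √((a₂ - a₀) * (a₂ - a₁)))
      (Iio a₂) := by
  refine (continuous_arcsin.comp_continuousOn ?_).div_const _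
  refine ContinuousOn.sub (ContinuousOn.div (by fun_prop) (by fun_prop) fun t ht ↦ ?_)
    continuousOn_const
  exact mul_ne_zero (sub_ne_zero.2 h01.symm) (sub_pos.2 ht).ne'


lemma intervalIntegrable_inv_sqrt_mul_sub_s8 (h01 : a₀ < a₁) (h12 : a₁ < a₂)
    (hlam : lam ∈ Icc a₀ a₁) :
    IntervalIntegrable (fun t ↦ 1 / (√((t - a₀) * (a₁ - t)) * (a₂ - t))) volume lam a₁ := by
  rw [intervalIntegrable_iff_integrableOn_Ioc_of_le hlam.2]
  refine intervalIntegral.integrableOn_deriv_of_nonneg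
    ((continuousOn_arcsin_mobiusToUnit h01.ne).mono fun t ht ↦ ht.2.trans_lt h12)
    (fun t ht ↦ hasDerivAt_arcsin_mobiusToUnit h01 h12 (Ioo_subset_Ioo_left hlam.1 ht))
    fun t ht ↦ ?_
  have : 0 ≤ a₂ - t := by linarith [ht.2]
  positivity

lemma integral_inv_sqrt_mul_sub (h01 : a₀ < a₁) (h12 : a₁ < a₂) (hlam : lam ∈ Icc a₀ a₁) :
    ∫ t in lam..a₁, 1 / (√((t - a₀) * (a₁ - t)) * (a₂ - t))
      = (π / 2 - arcsin (mobiusToUnit a₀ a₁ a₂ lam)) / √((a₂ - a₀) * (a₂ - a₁)) := by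
  rw [intervalIntegral.integral_eq_sub_of_hasDerivAt_of_le hlam.2
      ((continuousOn_arcsin_mobiusToUnit h01.ne).mono fun t ht ↦ ht.2.trans_lt h12)
      (fun t ht ↦ hasDerivAt_arcsin_mobiusToUnit h01 h12 (Ioo_subset_Ioo_left hlam.1 ht))
      (intervalIntegrable_inv_sqrt_mul_sub_s8 h01 h12 hlam),
    mobiusToUnit_right h01.ne h12.ne, arcsin_one, sub_div]

lemma integral_inv_sqrt_mul_sub_lt (h12 : a₁ < a₂) (hlam : lam ∈ Ioc a₀ a₁) :
    ∫ t in lam..a₁, 1 / (√((t - a₀) * (a₁ - t)) * (a₂ - t))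
      < π / √((a₂ - a₀) * (a₂ - a₁)) := by
  have h01 : a₀ < a₁ := hlam.1.trans_le hlam.2
  rw [integral_inv_sqrt_mul_sub h01 h12 (Ioc_subset_Icc_self hlam),
    div_lt_div_iff_of_pos_right (sqrt_pos.2 (by nlinarith))]
  linarith [neg_pi_div_two_lt_arcsin.2
    (neg_one_lt_mobiusToUnit h01 h12 hlam.1 (hlam.2.trans_lt h12))]

lemma integral_sqrt_div_lt (ha₁ : 0 < a₁) (h12 : a₁ < a₂) (hlam : lam ∈ Ioc a₀ a₁) :
    ∫ t in lam..a₁, √t / (√((t - a₀) * (a₁ - t)) * (a₂ - t))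
      < √a₁ * (π / √((a₂ - a₀) * (a₂ - a₁))) := by
  have hf := intervalIntegrable_inv_sqrt_mul_sub_s8 (hlam.1.trans_le hlam.2) h12
    (Ioc_subset_Icc_self hlam)
  have hg : IntervalIntegrable (fun t ↦ √t / (√((t - a₀) * (a₁ - t)) * (a₂ - t))) volume
      lam a₁ := by
    simpa only [mul_one_div] using hf.continuousOn_mul continuous_sqrt.continuousOn
  calc ∫ t in lam..a₁, √t / (√((t - a₀) * (a₁ - t)) * (a₂ - t))
      ≤ ∫ t in lam..a₁, √a₁ * (1 / (√((t - a₀) * (a₁ - t)) * (a₂ - t))) := by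
        refine intervalIntegral.integral_mono_on hlam.2 hg (hf.const_mul _) fun t ht ↦ ?_
        rw [mul_one_div]
        exact div_le_div_of_nonneg_right (sqrt_le_sqrt ht.2)
          (mul_nonneg (sqrt_nonneg _) (by linarith [ht.2]))
    _ = √a₁ * ∫ t in lam..a₁, 1 / (√((t - a₀) * (a₁ - t)) * (a₂ - t)) :=
        intervalIntegral.integral_const_mul _ _
    _ < √a₁ * (π / √((a₂ - a₀) * (a₂ - a₁))) :=
        mul_lt_mul_of_pos_left (integral_inv_sqrt_mul_sub_lt h12 hlam) (sqrt_pos.2 ha₁)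

end

theorem stmt8_general (a₀ a₁ a₂ : ℝ) (h0 : 0 < a₀) (h2 : a₁ < a₂) :
    ∀ lam ∈ Set.Ioo a₀ a₁,
      (Real.sqrt ((a₂ - a₀) * (a₂ - a₁) / a₂) / π) *
          (∫ t in lam..a₁,
            Real.sqrt t / (Real.sqrt ((t - a₀) * (a₁ - t)) * (a₂ - t)))
        < Real.sqrt (a₁ / a₂)
      ∧ Real.sqrt (a₁ / a₂) < 1 := by
  rintro lam ⟨hlam₀, hlam₁⟩
  have ha₂ : 0 < a₂ := by linarith
  have hA : 0 < a₂ - a₀ := by linarith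
  have hB : 0 < a₂ - a₁ := by linarith
  refine ⟨?_, (sqrt_lt' one_pos).2 (by rwa [one_pow, div_lt_one ha₂])⟩
  calc √((a₂ - a₀) * (a₂ - a₁) / a₂) / π
        * ∫ t in lam..a₁, √t / (√((t - a₀) * (a₁ - t)) * (a₂ - t))
      < √((a₂ - a₀) * (a₂ - a₁) / a₂) / π * (√a₁ * (π / √((a₂ - a₀) * (a₂ - a₁)))) := by
        refine mul_lt_mul_of_pos_left (integral_sqrt_div_lt (by linarith) h2 ⟨hlam₀, hlam₁.le⟩) ?_
        positivity
    _ = √(a₁ / a₂) := by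
        have hD : 0 < √((a₂ - a₀) * (a₂ - a₁)) := by positivity
        rw [sqrt_div (by positivity), sqrt_div (by linarith)]
        field_simp

theorem stmt8 (a₀ a₁ a₂ : ℝ) (h0 : 0 < a₀) (h1 : a₀ < a₁) (h2 : a₁ < a₂) :
    ∀ lam ∈ Set.Ioo a₀ a₁,
      (Real.sqrt ((a₂ - a₀) * (a₂ - a₁) / a₂) / π) *
          (∫ t in lam..a₁,
            Real.sqrt t / (Real.sqrt ((t - a₀) * (a₁ - t)) * (a₂ - t)))
        < Real.sqrt (a₁ / a₂)
      ∧ Real.sqrt (a₁ / a₂) < 1 :=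
  stmt8_general a₀ a₁ a₂ h0 h2
end

section
/- Let 0 < a₀ < a₁ < a₂. The function λ ↦ ∫_{a₁}^λ √s / (√((a₂-s)(s-a₁)) (s-a₀)) ds is strictly increasing on (a₁, a₂), tends to 0 as λ → a₁⁺, and for every λ ∈ (a₁, a₂) satisfies (√((a₂-a₀)(a₁-a₀)/a₀)/π) · ∫_{a₁}^λ √s/(√((a₂-s)(s-a₁))(s-a₀)) ds < √(a₂(a₂-a₀)/(a₀(a₁-a₀))). -/
/-!
On `(a₁, a₂)` the integrand is at most `√a₂ / (a₁ - a₀)` times `1 / √((a₂ - s)(s - a₁))`, whose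
primitive `arcsin ((2s - a₁ - a₂) / (a₂ - a₁))` increases by less than `π` on `[a₁, λ]`. This gives the
bound, since `√((a₂ - a₀)(a₁ - a₀) / a₀) · √a₂ / (a₁ - a₀)` is the right-hand side. The same domination
makes the integrand integrable up to `a₂`, so its primitive is continuous at `a₁`, and it is strictly
increasing because the integrand is positive.
-/

open Real Set Filter Topology MeasureTheory intervalIntegral

section Primitive

variable {f : ℝ → ℝ} {a b : ℝ}

theorem strictMonoOn_primitive_of_pos (hf : IntervalIntegrable f volume a b)
    (hpos : ∀ x ∈ Ioo a b, 0 < f x) : StrictMonoOn (fun x => ∫ t in a..x, f t) (Icc a b) := by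
  intro x hx y hy hxy
  have hxb : IntervalIntegrable f volume a x :=
    hf.mono_set (uIcc_subset_uIcc_left (Icc_subset_uIcc hx))
  have hyb : IntervalIntegrable f volume a y :=
    hf.mono_set (uIcc_subset_uIcc_left (Icc_subset_uIcc hy))
  have hxy_pos : 0 < ∫ t in x..y, f t :=
    intervalIntegral_pos_of_pos_on (hxb.symm.trans hyb)
      (fun t ht => hpos t ⟨hx.1.trans_lt ht.1, ht.2.trans_le hy.2⟩) hxy
  have := integral_interval_sub_left hyb hxb
  simp only
  linarith

theorem tendsto_primitive_nhdsGT (hf : IntervalIntegrable f volume a b) (hab : a < b) :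
    Tendsto (fun x => ∫ t in a..x, f t) (𝓝[>] a) (𝓝 0) := by
  have hcont := continuousOn_primitive_interval' hf left_mem_uIcc a left_mem_uIcc
  rw [uIcc_of_le hab.le] at hcont
  simpa only [ContinuousWithinAt, integral_same] using
    hcont.mono_of_mem_nhdsWithin (Icc_mem_nhdsGT hab)

end Primitive

section ArcsinPrimitive

variable {a b : ℝ}

theorem hasDerivAt_arcsin_affine {s : ℝ} (hs : s ∈ Ioo a b) :
    HasDerivAt (fun x => arcsin ((2 * x - a - b) / (b - a))) (1 / √((b - s) * (s - a))) s := by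
  obtain ⟨hsa, hsb⟩ := hs
  have hba : 0 < b - a := by linarith
  have hlin : HasDerivAt (fun x : ℝ => (2 * x - a - b) / (b - a)) (2 / (b - a)) s := by
    simpa using ((((hasDerivAt_id s).const_mul 2).sub_const a).sub_const b).div_const (b - a)
  have hgt : (-1 : ℝ) < (2 * s - a - b) / (b - a) := by rw [lt_div_iff₀ hba]; linarith
  have hlt : (2 * s - a - b) / (b - a) < 1 := by rw [div_lt_one hba]; linarith
  refine ((hasDerivAt_arcsin hgt.ne' hlt.ne).comp s hlin).congr_deriv ?_
  have hsq : 1 - ((2 * s - a - b) / (b - a)) ^ 2 = (2 / (b - a)) ^ 2 * ((b - s) * (s - a)) := by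
    field_simp; ring
  have hprod : 0 < √((b - s) * (s - a)) := sqrt_pos.2 (by nlinarith)
  rw [hsq, sqrt_mul (by positivity), sqrt_sq (by positivity)]
  field_simp

theorem continuous_arcsin_affine : Continuous (fun x => arcsin ((2 * x - a - b) / (b - a))) := by
  fun_prop

theorem integrableOn_one_div_sqrt_mul_sub :
    IntegrableOn (fun s => 1 / √((b - s) * (s - a))) (Ioc a b) :=
  integrableOn_deriv_of_nonneg continuous_arcsin_affine.continuousOn
    (fun _ hs => hasDerivAt_arcsin_affine hs) (fun _ _ => by positivity)

theorem intervalIntegrable_one_div_sqrt_mul_sub (hab : a ≤ b) :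
    IntervalIntegrable (fun s => 1 / √((b - s) * (s - a))) volume a b :=
  (intervalIntegrable_iff_integrableOn_Ioc_of_le hab).2 integrableOn_one_div_sqrt_mul_sub

theorem integral_one_div_sqrt_mul_sub {c : ℝ} (hac : a ≤ c) (hcb : c < b) :
    ∫ s in a..c, 1 / √((b - s) * (s - a)) = arcsin ((2 * c - a - b) / (b - a)) + π / 2 := by
  have hint : IntervalIntegrable (fun s => 1 / √((b - s) * (s - a))) volume a c :=
    (intervalIntegrable_one_div_sqrt_mul_sub (hac.trans hcb.le)).mono_set
      (uIcc_subset_uIcc_left (Icc_subset_uIcc ⟨hac, hcb.le⟩))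
  rw [integral_eq_sub_of_hasDerivAt_of_le hac continuous_arcsin_affine.continuousOn
    (fun s hs => hasDerivAt_arcsin_affine ⟨hs.1, hs.2.trans hcb⟩) hint]
  have : (2 * a - a - b) / (b - a) = -1 := by
    rw [div_eq_iff (by linarith)]; ring
  rw [this, arcsin_neg_one, sub_neg_eq_add]

theorem integral_one_div_sqrt_mul_sub_lt_pi {c : ℝ} (hac : a ≤ c) (hcb : c < b) :
    ∫ s in a..c, 1 / √((b - s) * (s - a)) < π := by
  rw [integral_one_div_sqrt_mul_sub hac hcb]
  have : arcsin ((2 * c - a - b) / (b - a)) < π / 2 :=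
    arcsin_lt_pi_div_two.2 ((div_lt_one (by linarith)).2 (by linarith))
  linarith

end ArcsinPrimitive

section Integrand

variable {a₀ a₁ a₂ s : ℝ}

theorem integrand_pos (ha₁ : 0 ≤ a₁) (h1 : a₀ < a₁) (hs : s ∈ Ioo a₁ a₂) :
    0 < √s / (√((a₂ - s) * (s - a₁)) * (s - a₀)) := by
  obtain ⟨hs1, hs2⟩ := hs
  have : 0 < √((a₂ - s) * (s - a₁)) := sqrt_pos.2 (mul_pos (by linarith) (by linarith))
  exact div_pos (sqrt_pos.2 (by linarith)) (mul_pos this (by linarith))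

theorem integrand_le_mul_one_div_sqrt (h1 : a₀ < a₁) (hs : s ∈ Ioo a₁ a₂) :
    √s / (√((a₂ - s) * (s - a₁)) * (s - a₀))
      ≤ √a₂ / (a₁ - a₀) * (1 / √((a₂ - s) * (s - a₁))) := by
  obtain ⟨hs1, hs2⟩ := hs
  rw [mul_one_div, div_div, mul_comm (a₁ - a₀)]
  gcongr

theorem intervalIntegrable_integrand (h1 : a₀ < a₁) (h2 : a₁ ≤ a₂) :
    IntervalIntegrable (fun s => √s / (√((a₂ - s) * (s - a₁)) * (s - a₀))) volume a₁ a₂ := by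
  rw [intervalIntegrable_iff_integrableOn_Ioo_of_le h2]
  refine ((integrableOn_one_div_sqrt_mul_sub.mono_set Ioo_subset_Ioc_self).const_mul
    (√a₂ / (a₁ - a₀))).mono' (Measurable.aestronglyMeasurable (by fun_prop)) ?_
  refine (ae_restrict_iff' measurableSet_Ioo).2 (Eventually.of_forall fun s hs => ?_)
  rw [norm_of_nonneg
    (div_nonneg (sqrt_nonneg _) (mul_nonneg (sqrt_nonneg _) (by linarith [hs.1])))]
  exact integrand_le_mul_one_div_sqrt h1 hs

theorem mul_integral_integrand_lt {lam : ℝ} (h0 : 0 < a₀) (h1 : a₀ < a₁)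
    (hlam : lam ∈ Ioo a₁ a₂) :
    √((a₂ - a₀) * (a₁ - a₀) / a₀) / π *
        ∫ s in a₁..lam, √s / (√((a₂ - s) * (s - a₁)) * (s - a₀))
      < √(a₂ * (a₂ - a₀) / (a₀ * (a₁ - a₀))) := by
  obtain ⟨hl1, hl2⟩ := hlam
  set c := √a₂ / (a₁ - a₀)
  set K := √((a₂ - a₀) * (a₁ - a₀) / a₀)
  have hK : 0 < K := sqrt_pos.2 (div_pos (mul_pos (by linarith) (by linarith)) h0)
  have hc : 0 < c := div_pos (sqrt_pos.2 (by linarith)) (by linarith)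
  have hKc : K * c = √(a₂ * (a₂ - a₀) / (a₀ * (a₁ - a₀))) := by
    rw [show c = √(a₂ / (a₁ - a₀) ^ 2) by rw [sqrt_div' _ (sq_nonneg _), sqrt_sq (by linarith)],
      ← sqrt_mul (div_nonneg (mul_nonneg (by linarith) (by linarith)) h0.le)]
    congr 1
    field_simp [(by linarith : a₁ - a₀ ≠ 0)]
  have hle : ∫ s in a₁..lam, √s / (√((a₂ - s) * (s - a₁)) * (s - a₀))
      ≤ c * ∫ s in a₁..lam, 1 / √((a₂ - s) * (s - a₁)) := by
    rw [← intervalIntegral.integral_const_mul]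
    refine integral_mono_on_of_le_Ioo hl1.le
      ((intervalIntegrable_integrand h1 (hl1.trans hl2).le).mono_set
        (uIcc_subset_uIcc_left (Icc_subset_uIcc ⟨hl1.le, hl2.le⟩)))
      (((intervalIntegrable_one_div_sqrt_mul_sub (hl1.trans hl2).le).mono_set
        (uIcc_subset_uIcc_left (Icc_subset_uIcc ⟨hl1.le, hl2.le⟩))).const_mul c)
      (fun s hs => integrand_le_mul_one_div_sqrt h1 ⟨hs.1, hs.2.trans hl2⟩)
  calc K / π * ∫ s in a₁..lam, √s / (√((a₂ - s) * (s - a₁)) * (s - a₀))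
      ≤ K / π * (c * ∫ s in a₁..lam, 1 / √((a₂ - s) * (s - a₁))) := by gcongr
    _ < K / π * (c * π) := by gcongr; exact integral_one_div_sqrt_mul_sub_lt_pi hl1.le hl2
    _ = K * c := by field_simp
    _ = _ := hKc

end Integrand

theorem stmt12 (a₀ a₁ a₂ : ℝ) (h0 : 0 < a₀) (h1 : a₀ < a₁) (h2 : a₁ < a₂) :
    StrictMonoOn
        (fun lam => ∫ s in a₁..lam,
          Real.sqrt s / (Real.sqrt ((a₂ - s) * (s - a₁)) * (s - a₀)))
        (Set.Ioo a₁ a₂)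
    ∧ Filter.Tendsto
        (fun lam => ∫ s in a₁..lam,
          Real.sqrt s / (Real.sqrt ((a₂ - s) * (s - a₁)) * (s - a₀)))
        (nhdsWithin a₁ (Set.Ioi a₁)) (nhds 0)
    ∧ ∀ lam ∈ Set.Ioo a₁ a₂,
        (Real.sqrt ((a₂ - a₀) * (a₁ - a₀) / a₀) / π) *
            (∫ s in a₁..lam,
              Real.sqrt s / (Real.sqrt ((a₂ - s) * (s - a₁)) * (s - a₀)))
          < Real.sqrt (a₂ * (a₂ - a₀) / (a₀ * (a₁ - a₀))) := by
  have hF := intervalIntegrable_integrand h1 h2.le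
  refine ⟨?_, tendsto_primitive_nhdsGT hF h2, fun lam hlam => mul_integral_integrand_lt h0 h1 hlam⟩
  exact (strictMonoOn_primitive_of_pos hF fun s hs => integrand_pos (h0.trans h1).le h1 hs).mono
    Ioo_subset_Icc_self
end
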